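/- For smooth g, m : ℝ → ℝ, the vector fields X₁ = ∂_t, Y(g), and W(m) satisfy [X₁, Y(g)] = Y(g') and [X₁, W(m)] = W(m'); moreover [Y(g), W(m)] = 0. -/

import Mathlib

/-- Coordinates on ℝ⁷: indices 0..6 ↦ (t,x,y,z,u,v,w). -/
abbrev R7 := Fin 7 → ℝ

/-- Lie bracket of vector fields on ℝ⁷ (in coefficient form). -/
noncomputable def lieBracket (V W : R7 → R7) : R7 → R7 :=
  fun p => fderiv ℝ W p (V p) - fderiv ℝ V p (W p)

/-- X₁ = ∂_t. -/
noncomputable def X₁ : R7 → R7 := fun _ => ![1, 0, 0, 0, 0, 0, 0]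

/-- Y(g) = g(t)∂_x - (x/2)[g'(t)(v∂_u - u∂_v) + g''(t)∂_w]. -/
noncomputable def Yfield (g : ℝ → ℝ) : R7 → R7 :=
  fun p => ![0, g (p 0), 0, 0,
    -(p 1 / 2) * deriv g (p 0) * p 5,
    (p 1 / 2) * deriv g (p 0) * p 4,
    -(p 1 / 2) * deriv (deriv g) (p 0)]

/-- W(m) = m(t)(v∂_u - u∂_v) + m'(t)∂_w. -/
noncomputable def Wfield (m : ℝ → ℝ) : R7 → R7 :=
  fun p => ![0, 0, 0, 0, m (p 0) * p 5, -(m (p 0)) * p 4, deriv m (p 0)]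

@[simp] lemma cons_val_five {α : Type*} (a b c d e f g : α) : ![a,b,c,d,e,f,g] 5 = f := rfl
@[simp] lemma cons_val_six {α : Type*} (a b c d e f g : α) : ![a,b,c,d,e,f,g] 6 = g := rfl

open ContinuousLinearMap in
lemma comp_coord {f : ℝ → ℝ} (p : R7) (hf : DifferentiableAt ℝ f (p 0)) :
    fderiv ℝ (fun q : R7 => f (q 0)) p = deriv f (p 0) • (proj 0 : R7 →L[ℝ] ℝ) :=
  (hf.hasDerivAt.comp_hasFDerivAt p (hasFDerivAt_apply 0 p)).fderiv

lemma coordd (p : R7) (i : Fin 7) : fderiv ℝ (fun q : R7 => q i) p = ContinuousLinearMap.proj i :=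
  (hasFDerivAt_apply i p).fderiv

lemma halfd (p : R7) (i : Fin 7) :
    fderiv ℝ (fun q : R7 => q i / 2) p = (2⁻¹ : ℝ) • ContinuousLinearMap.proj i := by
  rw [show (fun q : R7 => q i / 2) = fun q : R7 => q i * 2⁻¹ from by funext q; ring,
    fderiv_mul_const (by fun_prop), coordd]

lemma d_comp {f : ℝ → ℝ} (hf : Differentiable ℝ f) (p v : R7) :
    fderiv ℝ (fun q : R7 => f (q 0)) p v = deriv f (p 0) * v 0 := by
  rw [comp_coord p (hf _)]; simp

lemma dProd {f : ℝ → ℝ} (hf : Differentiable ℝ f) (p v : R7) (i j : Fin 7) :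
    fderiv ℝ (fun q : R7 => q i / 2 * f (q 0) * q j) p v =
      v i / 2 * f (p 0) * p j + p i / 2 * (deriv f (p 0) * v 0) * p j
        + p i / 2 * f (p 0) * v j := by
  rw [fderiv_fun_mul (by fun_prop) (by fun_prop), fderiv_fun_mul (by fun_prop) (by fun_prop),
    halfd, comp_coord p (hf _), coordd]
  simp; ring

lemma dProd2 {f : ℝ → ℝ} (hf : Differentiable ℝ f) (p v : R7) (i : Fin 7) :
    fderiv ℝ (fun q : R7 => q i / 2 * f (q 0)) p v =
      v i / 2 * f (p 0) + p i / 2 * (deriv f (p 0) * v 0) := by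
  rw [fderiv_fun_mul (by fun_prop) (by fun_prop), halfd, comp_coord p (hf _)]
  simp; ring

lemma dMul {f : ℝ → ℝ} (hf : Differentiable ℝ f) (p v : R7) (j : Fin 7) :
    fderiv ℝ (fun q : R7 => f (q 0) * q j) p v =
      deriv f (p 0) * v 0 * p j + f (p 0) * v j := by
  rw [fderiv_fun_mul (by fun_prop) (by fun_prop), comp_coord p (hf _), coordd]
  simp; ring

lemma fd_apply (F : R7 → R7) (p v : R7)
    (h : ∀ i, DifferentiableAt ℝ (fun q => F q i) p) (i : Fin 7) :
    fderiv ℝ F p v i = fderiv ℝ (fun q => F q i) p v := by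
  rw [show fderiv ℝ F p = fderiv ℝ (fun q i => F q i) p from rfl, fderiv_pi h]
  simp

lemma hYdiff {g : ℝ → ℝ} (hg : Differentiable ℝ g) (hg1 : Differentiable ℝ (deriv g))
    (hg2 : Differentiable ℝ (deriv (deriv g))) (p : R7) :
    ∀ i, DifferentiableAt ℝ (fun q => Yfield g q i) p := by
  intro i
  fin_cases i <;> simp [Yfield] <;> fun_prop

lemma hWdiff {m : ℝ → ℝ} (hm : Differentiable ℝ m) (hm1 : Differentiable ℝ (deriv m)) (p : R7) :
    ∀ i, DifferentiableAt ℝ (fun q => Wfield m q i) p := by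
  intro i
  fin_cases i <;> simp [Wfield] <;> fun_prop

/-- [X₁, Y(g)] = Y(g'), [X₁, W(m)] = W(m'), and [Y(g), W(m)] = 0. -/
theorem stmt_5 (g m : ℝ → ℝ) (hg : ContDiff ℝ (⊤ : ℕ∞) g) (hm : ContDiff ℝ (⊤ : ℕ∞) m) :
    lieBracket X₁ (Yfield g) = Yfield (deriv g) ∧
    lieBracket X₁ (Wfield m) = Wfield (deriv m) ∧
    lieBracket (Yfield g) (Wfield m) = 0 := by
  have hg' : ContDiff ℝ (⊤:ℕ∞) g := hg.of_le (by simp)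
  have hm' : ContDiff ℝ (⊤:ℕ∞) m := hm.of_le (by simp)
  have hg1 := (contDiff_infty_iff_deriv.mp hg').2
  have hg2 := (contDiff_infty_iff_deriv.mp hg1).2
  have hm1 := (contDiff_infty_iff_deriv.mp hm').2
  have Hg : Differentiable ℝ g := hg'.differentiable (by norm_num)
  have Hg1 : Differentiable ℝ (deriv g) := hg1.differentiable (by norm_num)
  have Hg2 : Differentiable ℝ (deriv (deriv g)) := hg2.differentiable (by norm_num)
  have Hm : Differentiable ℝ m := hm'.differentiable (by norm_num)
  have Hm1 : Differentiable ℝ (deriv m) := hm1.differentiable (by norm_num)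
  refine ⟨?_, ?_, ?_⟩
  · funext p
    have hX : fderiv ℝ X₁ p = 0 := (hasFDerivAt_const (![1,0,0,0,0,0,0] : R7) p).fderiv
    funext i
    simp only [lieBracket, Pi.sub_apply, hX, ContinuousLinearMap.zero_apply, sub_zero]
    rw [fd_apply _ p _ (hYdiff Hg Hg1 Hg2 p) i]
    fin_cases i <;>
      simp [Yfield, X₁, d_comp Hg, d_comp Hg1, d_comp Hg2, dProd Hg1, dProd2 Hg2] <;> ring
  · funext p
    have hX : fderiv ℝ X₁ p = 0 := (hasFDerivAt_const (![1,0,0,0,0,0,0] : R7) p).fderiv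
    funext i
    simp only [lieBracket, Pi.sub_apply, hX, ContinuousLinearMap.zero_apply, sub_zero]
    rw [fd_apply _ p _ (hWdiff Hm Hm1 p) i]
    fin_cases i <;>
      simp [Wfield, X₁, d_comp Hm, d_comp Hm1, dMul Hm] <;> ring
  · funext p
    funext i
    simp only [lieBracket, Pi.sub_apply, Pi.zero_apply]
    rw [fd_apply _ p _ (hWdiff Hm Hm1 p) i, fd_apply _ p _ (hYdiff Hg Hg1 Hg2 p) i]
    fin_cases i <;>
      simp [Yfield, Wfield, d_comp Hg, d_comp Hg1, d_comp Hg2, d_comp Hm, d_comp Hm1,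
        dProd Hg1, dProd2 Hg2, dMul Hm] <;> ring
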